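/- There exists a constant C_Γ > 0, depending only on the Schottky data, such that for every word 𝐚 = a_1…a_n ∈ W° and all x, y ∈ I_{a_n}: (i) C_Γ^{-1} |I_𝐚| ≤ γ'_{𝐚'}(x) ≤ C_Γ |I_𝐚|; (ii) γ'_{𝐚'}(x)/γ'_{𝐚'}(y) ≤ exp(C_Γ |x − y|); and (iii) for every Borel set I' ⊂ I_{a_n}, denoting Lebesgue measure by |·|, C_Γ^{-1} |I_𝐚| · |I'| ≤ |γ_{𝐚'}(I')| ≤ C_Γ |I_𝐚| · |I'|. -/

import Mathlib

/-!
The derivative of `γ = [[a, b], [c, d]]` is `(cx + d)⁻²`, so all three estimates reduce to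
bounding ratios `|cx + d| / |cy + d|` on `I_{a_n}`. By the ping-pong property, `γ_{𝐚'}` is finite
outside the interior of `I_{ā}`, `a` the last letter of `𝐚'`; hence its pole `-d/c` lies in
`I_{ā} ≠ I_{a_n}` and so at distance at least the minimal gap `δ` between the intervals. As
`cx + d` is affine with that zero, `|cx + d| ≤ (1 + |x - y| / δ) |cy + d|`, which gives (ii) and,
with `|I_𝐚| = |I_{a_n}| / ((cx₀ + d)(cx₁ + d))`, also (i). Then (iii) is (i) combined with the
change of variables formula.
-/

open MeasureTheory Set Real Pointwise

noncomputable section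

abbrev SL2 := Matrix.SpecialLinearGroup (Fin 2) ℝ

/-- The Möbius transformation of `ℝ` associated to `g ∈ SL(2,ℝ)` (junk value at the pole). -/
def mobius (g : SL2) (x : ℝ) : ℝ :=
  (g 0 0 * x + g 0 1) / (g 1 0 * x + g 1 1)

/-- The derivative `γ'(x) = (cx+d)⁻²` of the Möbius transformation. -/
def mobiusDeriv (g : SL2) (x : ℝ) : ℝ :=
  ((g 1 0 * x + g 1 1) ^ 2)⁻¹

/-- The derivative of the Möbius transformation in the ball model,
`|γ'(x)|_B = ((1+x²)/(1+γ(x)²)) γ'(x)`. -/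
def mobiusDerivB (g : SL2) (x : ℝ) : ℝ :=
  ((1 + x ^ 2) / (1 + mobius g x ^ 2)) * mobiusDeriv g x

/-- The Möbius action of `SL(2,ℝ)` on `ℝ ∪ {∞}`. -/
def mobiusOP (g : SL2) (x : OnePoint ℝ) : OnePoint ℝ :=
  Option.elim x
    (if g 1 0 = 0 then OnePoint.infty else ((g 0 0 / g 1 0 : ℝ) : OnePoint ℝ))
    (fun y => if g 1 0 * y + g 1 1 = 0 then OnePoint.infty
      else ((mobius g y : ℝ) : OnePoint ℝ))

/-- The pole `γ⁻¹(∞) = -d/c` of `γ = [[a,b],[c,d]]`. -/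
def mobiusPole (g : SL2) : ℝ := -(g 1 1) / (g 1 0)

/-- The distortion factor `α(γ, [x₀,x₁]) = log((γ⁻¹(∞) − x₁)/(γ⁻¹(∞) − x₀))`,
with the convention `α = 0` when `γ⁻¹(∞) = ∞` (i.e. `c = 0`). -/
def alphaDist (g : SL2) (x₀ x₁ : ℝ) : ℝ :=
  if g 1 0 = 0 then 0 else Real.log ((mobiusPole g - x₁) / (mobiusPole g - x₀))

/-- The letter `ā` paired with `a` in the alphabet `{1,…,2r}` (modelled by `Fin (2r)`). -/
def bar {r : ℕ} (a : Fin (2 * r)) : Fin (2 * r) :=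
  if h : (a : ℕ) < r then ⟨(a : ℕ) + r, by omega⟩
  else ⟨(a : ℕ) - r, by have := a.isLt; omega⟩

/-- Schottky data: `2r` disjoint compact intervals `I_a = [ξ₀ a, ξ₁ a]` on the real line and
transformations `γ_a ∈ SL(2,ℝ)` with `γ_ā = γ_a⁻¹` such that `γ_a` maps the complement (in
`ℝ ∪ {∞}`) of the interior of `I_ā` onto `I_a`. -/
structure SchottkyData (r : ℕ) where
  hr : 2 ≤ r
  ξ₀ : Fin (2 * r) → ℝ
  ξ₁ : Fin (2 * r) → ℝ
  hlt : ∀ a, ξ₀ a < ξ₁ a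
  hdisj : ∀ a b, a ≠ b → Disjoint (Icc (ξ₀ a) (ξ₁ a)) (Icc (ξ₀ b) (ξ₁ b))
  γ : Fin (2 * r) → SL2
  hinv : ∀ a, γ (bar a) = (γ a)⁻¹
  hmap : ∀ a, mobiusOP (γ a) ''
      (univ \ ((fun t : ℝ => (t : OnePoint ℝ)) '' Ioo (ξ₀ (bar a)) (ξ₁ (bar a))))
      = (fun t : ℝ => (t : OnePoint ℝ)) '' Icc (ξ₀ a) (ξ₁ a)

namespace SchottkyData

variable {r : ℕ}

/-- `l` is a word: no letter is followed by its bar. -/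
def IsWord (_ : SchottkyData r) (l : List (Fin (2 * r))) : Prop :=
  l.Chain' fun p q => q ≠ bar p

/-- The group element `γ_𝐚 = γ_{a_1} ⋯ γ_{a_n}` of a word. -/
def wordγ (S : SchottkyData r) (l : List (Fin (2 * r))) : SL2 :=
  (l.map S.γ).prod

/-- The interval `I_𝐚 = γ_{𝐚'}(I_{a_n})` of a nonempty word (and `∅` for the empty word). -/
def wordI (S : SchottkyData r) (l : List (Fin (2 * r))) : Set ℝ :=
  if h : l = [] then ∅
  else mobius (S.wordγ l.dropLast) '' Icc (S.ξ₀ (l.getLast h)) (S.ξ₁ (l.getLast h))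

/-- The limit set `Λ_Γ = ⋂_n ⋃_{𝐚 ∈ W_n} I_𝐚`. -/
def limitSet (S : SchottkyData r) : Set ℝ :=
  ⋂ n : ℕ, ⋃ (l : List (Fin (2 * r))) (_ : S.IsWord l ∧ l.length = n + 1), S.wordI l

/-- `μ` is the (δ-conformal) Patterson–Sullivan measure: a Borel probability measure
supported on the limit set satisfying the equivariance property under the group
generated by the Schottky transformations. -/
def IsPS (S : SchottkyData r) (δ : ℝ) (μ : Measure ℝ) : Prop :=
  IsProbabilityMeasure μ ∧ μ S.limitSetᶜ = 0 ∧
    ∀ g ∈ Subgroup.closure (Set.range S.γ), ∀ f : ℝ → ℝ, Measurable f →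
      (∃ C, ∀ x, |f x| ≤ C) →
      ∫ x, f x ∂μ = ∫ x, f (mobius g x) * mobiusDerivB g x ^ δ ∂μ

/-- The partition `Z(τ) = {𝐚 ∈ W° : |I_𝐚| ≤ τ < |I_{𝐚'}|}` (with `|I_∅| = ∞`). -/
def Zpart (S : SchottkyData r) (τ : ℝ) : Set (List (Fin (2 * r))) :=
  {l | S.IsWord l ∧ l ≠ [] ∧ (MeasureTheory.volume (S.wordI l)).toReal ≤ τ ∧
    (l.dropLast = [] ∨ τ < (MeasureTheory.volume (S.wordI l.dropLast)).toReal)}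

end SchottkyData

/-- The length `|I|` of an interval `I ⊂ ℝ`. -/
def ivlen (I : Set ℝ) : ℝ := (MeasureTheory.volume I).toReal

/-- `𝐚 ⇝ 𝐛` : the last letter of `𝐚` equals the first letter of `𝐛`. -/
def chn {X : Type*} (l m : List X) : Prop :=
  ∃ (h1 : l ≠ []) (h2 : m ≠ []), l.getLast h1 = m.head h2

/-- The center of an interval. -/
def ctr (I : Set ℝ) : ℝ := (sInf I + sSup I) / 2

end

noncomputable section

open MeasureTheory Set Real
def mobiusDen (g : SL2) (x : ℝ) : ℝ := g 1 0 * x + g 1 1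

lemma SL2.det_fin_two (g : SL2) : g 0 0 * g 1 1 - g 0 1 * g 1 0 = 1 := by
  have hdet := g.2
  rwa [Matrix.det_fin_two] at hdet

lemma SL2.mul_apply (g h : SL2) (i j : Fin 2) :
    (g * h) i j = g i 0 * h 0 j + g i 1 * h 1 j := by
  simp [Matrix.SpecialLinearGroup.coe_mul, Matrix.mul_apply, Fin.sum_univ_two]

lemma mobiusDeriv_eq_inv_sq (g : SL2) (x : ℝ) : mobiusDeriv g x = (mobiusDen g x ^ 2)⁻¹ := rfl

lemma mobiusDen_one (x : ℝ) : mobiusDen 1 x = 1 := by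
  simp [mobiusDen, Matrix.SpecialLinearGroup.coe_one]

lemma mobiusDen_mul (g h : SL2) {x : ℝ} (hh : mobiusDen h x ≠ 0) :
    mobiusDen (g * h) x = mobiusDen g (mobius h x) * mobiusDen h x := by
  simp only [mobiusDen, mobius, SL2.mul_apply] at *
  field_simp
  ring

lemma mobius_mul (g h : SL2) {x : ℝ} (hh : mobiusDen h x ≠ 0)
    (hg : mobiusDen g (mobius h x) ≠ 0) :
    mobius (g * h) x = mobius g (mobius h x) := by
  have hgh : mobiusDen (g * h) x ≠ 0 := by
    rw [mobiusDen_mul g h hh]; exact mul_ne_zero hg hh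
  simp only [mobiusDen, SL2.mul_apply, mobius] at hgh hg hh ⊢
  rw [div_eq_div_iff hgh hg]
  field_simp
  ring

lemma mobius_sub_mobius (g : SL2) {x y : ℝ} (hx : mobiusDen g x ≠ 0) (hy : mobiusDen g y ≠ 0) :
    mobius g y - mobius g x = (y - x) / (mobiusDen g x * mobiusDen g y) := by
  have hdet := SL2.det_fin_two g
  simp only [mobiusDen] at hx hy ⊢
  rw [mobius, mobius, div_sub_div _ _ hy hx,
    div_eq_div_iff (mul_ne_zero hy hx) (mul_ne_zero hx hy)]
  linear_combination (g 1 0 * x + g 1 1) * (g 1 0 * y + g 1 1) * (y - x) * hdet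

lemma hasDerivAt_mobius (g : SL2) {x : ℝ} (hx : mobiusDen g x ≠ 0) :
    HasDerivAt (mobius g) (mobiusDeriv g x) x := by
  have hnum : HasDerivAt (fun y => g 0 0 * y + g 0 1) (g 0 0) x := by
    simpa using ((hasDerivAt_id x).const_mul (g 0 0)).add_const (g 0 1)
  have hden : HasDerivAt (fun y => g 1 0 * y + g 1 1) (g 1 0) x := by
    simpa using ((hasDerivAt_id x).const_mul (g 1 0)).add_const (g 1 1)
  have hdiv := hnum.div hden hx
  rwa [show g 0 0 * (g 1 0 * x + g 1 1) - (g 0 0 * x + g 0 1) * g 1 0 = 1 by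
    linear_combination SL2.det_fin_two g, one_div] at hdiv

lemma mobiusDen_mul_pos {g : SL2} {x₀ x₁ : ℝ} (hne : ∀ x ∈ Icc x₀ x₁, mobiusDen g x ≠ 0)
    {x y : ℝ} (hx : x ∈ Icc x₀ x₁) (hy : y ∈ Icc x₀ x₁) :
    0 < mobiusDen g x * mobiusDen g y := by
  refine (mul_ne_zero (hne x hx) (hne y hy)).lt_or_gt.resolve_left fun hneg => ?_
  have hcont : Continuous (mobiusDen g) := by unfold mobiusDen; fun_prop
  have hzero : (0 : ℝ) ∈ uIcc (mobiusDen g x) (mobiusDen g y) := by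
    rcases mul_neg_iff.mp hneg with ⟨h1, h2⟩ | ⟨h1, h2⟩
    · exact mem_uIcc.mpr (Or.inr ⟨h2.le, h1.le⟩)
    · exact mem_uIcc.mpr (Or.inl ⟨h1.le, h2.le⟩)
  obtain ⟨z, hz, hz0⟩ := intermediate_value_uIcc hcont.continuousOn hzero
  exact hne z (ordConnected_Icc.uIcc_subset hx hy hz) hz0

lemma strictMonoOn_mobius {g : SL2} {x₀ x₁ : ℝ} (hne : ∀ x ∈ Icc x₀ x₁, mobiusDen g x ≠ 0) :
    StrictMonoOn (mobius g) (Icc x₀ x₁) := by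
  intro x hx y hy hxy
  rw [← sub_pos, mobius_sub_mobius g (hne x hx) (hne y hy)]
  exact div_pos (sub_pos.mpr hxy) (mobiusDen_mul_pos hne hx hy)

lemma ivlen_mobius_image_Icc {g : SL2} {x₀ x₁ : ℝ} (h01 : x₀ ≤ x₁)
    (hne : ∀ x ∈ Icc x₀ x₁, mobiusDen g x ≠ 0) :
    ivlen (mobius g '' Icc x₀ x₁) = (x₁ - x₀) / (mobiusDen g x₀ * mobiusDen g x₁) := by
  have hx₀ : x₀ ∈ Icc x₀ x₁ := left_mem_Icc.mpr h01
  have hx₁ : x₁ ∈ Icc x₀ x₁ := right_mem_Icc.mpr h01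
  have hcont : ContinuousOn (mobius g) (Icc x₀ x₁) := fun x hx =>
    (hasDerivAt_mobius g (hne x hx)).continuousAt.continuousWithinAt
  rw [ivlen, hcont.image_Icc_of_monotoneOn h01 (strictMonoOn_mobius hne).monotoneOn,
    Real.volume_Icc, ENNReal.toReal_ofReal, mobius_sub_mobius g (hne _ hx₀) (hne _ hx₁)]
  exact sub_nonneg.mpr ((strictMonoOn_mobius hne).monotoneOn hx₀ hx₁ h01)

lemma abs_affine_mul_le {c d δ x y : ℝ} (hδ : 0 ≤ δ)
    (hzero : ∀ p, c * p + d = 0 → δ ≤ |y - p|) :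
    |c * x + d| * δ ≤ |c * y + d| * (δ + |x - y|) := by
  by_cases hc : c = 0
  · simp only [hc, zero_mul, zero_add]
    nlinarith [abs_nonneg d, abs_nonneg (x - y)]
  · set p := -d / c
    have hsplit : ∀ z, c * z + d = c * (z - p) := fun z => by simp only [p]; field_simp; ring
    have hyp : δ ≤ |y - p| := hzero p (by rw [hsplit, sub_self, mul_zero])
    have htri : |x - p| ≤ |y - p| + |x - y| := by
      simpa [add_comm] using abs_sub_le x y p
    rw [hsplit, hsplit, abs_mul, abs_mul, mul_assoc, mul_assoc]
    refine mul_le_mul_of_nonneg_left ?_ (abs_nonneg c)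
    nlinarith [abs_nonneg (x - y)]

/-- Stated through the zeros of `cx + d`, so that it holds vacuously when the pole of `g` is `∞`. -/
def PoleSeparated (g : SL2) (δ : ℝ) (s : Set ℝ) : Prop :=
  ∀ p, mobiusDen g p = 0 → ∀ y ∈ s, δ ≤ |y - p|

namespace PoleSeparated

variable {g : SL2} {δ x₀ x₁ : ℝ} {s : Set ℝ}

lemma mobiusDen_ne_zero (h : PoleSeparated g δ s) (hδ : 0 < δ) {y : ℝ} (hy : y ∈ s) :
    mobiusDen g y ≠ 0 := fun h0 => by
  simpa using hδ.trans_le (h y h0 y hy)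

lemma abs_mobiusDen_mul_le (h : PoleSeparated g δ s) (hδ : 0 ≤ δ) (x : ℝ) {y : ℝ}
    (hy : y ∈ s) : |mobiusDen g x| * δ ≤ |mobiusDen g y| * (δ + |x - y|) :=
  abs_affine_mul_le hδ fun p hp => h p hp y hy

lemma mobiusDeriv_div_le_exp (h : PoleSeparated g δ s) (hδ : 0 < δ) {x : ℝ} (hx : x ∈ s)
    (y : ℝ) : mobiusDeriv g x / mobiusDeriv g y ≤ exp (2 / δ * |x - y|) := by
  have hux := abs_pos.mpr (h.mobiusDen_ne_zero hδ hx)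
  have hratio : |mobiusDen g y| / |mobiusDen g x| ≤ 1 + |x - y| / δ := by
    have hyx := h.abs_mobiusDen_mul_le hδ.le y hx
    rw [abs_sub_comm] at hyx
    rw [div_le_iff₀ hux, one_add_div hδ.ne', div_mul_eq_mul_div, le_div_iff₀ hδ]
    linarith
  calc mobiusDeriv g x / mobiusDeriv g y = (|mobiusDen g y| / |mobiusDen g x|) ^ 2 := by
        rw [mobiusDeriv_eq_inv_sq, mobiusDeriv_eq_inv_sq, div_pow, sq_abs, sq_abs,
          inv_div_inv]
    _ ≤ exp (|x - y| / δ) ^ 2 := by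
        gcongr
        exact hratio.trans (by linarith [add_one_le_exp (|x - y| / δ)])
    _ = exp (2 / δ * |x - y|) := by rw [← exp_nat_mul]; ring_nf

lemma abs_mobiusDen_le (h : PoleSeparated g δ (Icc x₀ x₁)) (hδ : 0 < δ) {x y : ℝ}
    (hx : x ∈ Icc x₀ x₁) (hy : y ∈ Icc x₀ x₁) :
    |mobiusDen g x| ≤ (1 + (x₁ - x₀) / δ) * |mobiusDen g y| := by
  have hxy : |x - y| ≤ x₁ - x₀ := abs_sub_le_of_le_of_le hx.1 hx.2 hy.1 hy.2
  rw [one_add_div hδ.ne', div_mul_eq_mul_div, le_div_iff₀ hδ]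
  calc |mobiusDen g x| * δ ≤ |mobiusDen g y| * (δ + |x - y|) := h.abs_mobiusDen_mul_le hδ.le x hy
    _ ≤ (δ + (x₁ - x₀)) * |mobiusDen g y| := by rw [mul_comm]; gcongr

lemma abs_mobiusDen_mul_abs_le (h : PoleSeparated g δ (Icc x₀ x₁)) (hδ : 0 < δ)
    {x y z w : ℝ} (hx : x ∈ Icc x₀ x₁) (hy : y ∈ Icc x₀ x₁) (hz : z ∈ Icc x₀ x₁)
    (hw : w ∈ Icc x₀ x₁) :
    |mobiusDen g x| * |mobiusDen g y| ≤
      (1 + (x₁ - x₀) / δ) ^ 2 * (|mobiusDen g z| * |mobiusDen g w|) := by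
  have hK : 0 ≤ 1 + (x₁ - x₀) / δ := by
    linarith [div_nonneg (sub_nonneg.mpr (hx.1.trans hx.2)) hδ.le]
  calc |mobiusDen g x| * |mobiusDen g y|
      ≤ ((1 + (x₁ - x₀) / δ) * |mobiusDen g z|) * ((1 + (x₁ - x₀) / δ) * |mobiusDen g w|) :=
        mul_le_mul (h.abs_mobiusDen_le hδ hx hz) (h.abs_mobiusDen_le hδ hy hw) (abs_nonneg _)
          (mul_nonneg hK (abs_nonneg _))
    _ = (1 + (x₁ - x₀) / δ) ^ 2 * (|mobiusDen g z| * |mobiusDen g w|) := by ring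

lemma mobiusDeriv_mem_Icc (h : PoleSeparated g δ (Icc x₀ x₁)) (hδ : 0 < δ) (h01 : x₀ < x₁)
    {C : ℝ} (hC : (1 + (x₁ - x₀) / δ) ^ 2 * max (x₁ - x₀) (x₁ - x₀)⁻¹ ≤ C)
    {x : ℝ} (hx : x ∈ Icc x₀ x₁) :
    mobiusDeriv g x ∈ Icc (C⁻¹ * ivlen (mobius g '' Icc x₀ x₁))
      (C * ivlen (mobius g '' Icc x₀ x₁)) := by
  set L := x₁ - x₀
  set K := 1 + L / δ
  have hL : 0 < L := sub_pos.mpr h01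
  have hne := fun z (hz : z ∈ Icc x₀ x₁) => h.mobiusDen_ne_zero hδ hz
  have hx₀ : x₀ ∈ Icc x₀ x₁ := left_mem_Icc.mpr h01.le
  have hx₁ : x₁ ∈ Icc x₀ x₁ := right_mem_Icc.mpr h01.le
  set P := mobiusDen g x₀ * mobiusDen g x₁
  have hP : 0 < P := mobiusDen_mul_pos hne hx₀ hx₁
  have hP_abs : P = |mobiusDen g x₀| * |mobiusDen g x₁| := by rw [← abs_mul, abs_of_pos hP]
  have hu : 0 < mobiusDen g x ^ 2 := by positivity [hne x hx]
  have hu_abs : mobiusDen g x ^ 2 = |mobiusDen g x| * |mobiusDen g x| := by rw [← sq, sq_abs]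
  have hKL : K ^ 2 * L ≤ C :=
    (mul_le_mul_of_nonneg_left (le_max_left _ _) (by positivity)).trans hC
  have hKL' : K ^ 2 ≤ C * L := by
    rw [← div_le_iff₀ hL, div_eq_mul_inv]
    exact (mul_le_mul_of_nonneg_left (le_max_right _ _) (by positivity)).trans hC
  have hC0 : 0 < C := lt_of_lt_of_le (by positivity) hKL
  rw [ivlen_mobius_image_Icc h01.le hne, mobiusDeriv_eq_inv_sq, mem_Icc]
  constructor
  · rw [inv_mul_eq_div, div_div, ← one_div, div_le_div_iff₀ (by positivity) hu, one_mul]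
    calc L * mobiusDen g x ^ 2 ≤ L * (K ^ 2 * P) := by
          rw [hu_abs, hP_abs]
          exact mul_le_mul_of_nonneg_left (h.abs_mobiusDen_mul_abs_le hδ hx hx hx₀ hx₁) hL.le
      _ ≤ P * C := by rw [← mul_assoc, mul_comm L, mul_comm P]; gcongr
  · rw [mul_div_assoc', le_div_iff₀ hP, inv_mul_eq_div, div_le_iff₀ hu]
    calc P ≤ K ^ 2 * mobiusDen g x ^ 2 := by
          rw [hu_abs, hP_abs]; exact h.abs_mobiusDen_mul_abs_le hδ hx₀ hx₁ hx hx
      _ ≤ C * L * mobiusDen g x ^ 2 := by gcongr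

end PoleSeparated

lemma Finite.exists_pos_le {ι : Type*} [Finite ι] (f : ι → ℝ) (hf : ∀ i, 0 < f i) :
    ∃ δ > 0, ∀ i, δ ≤ f i := by
  -- the extra point `none` makes the domain nonempty
  obtain ⟨o, ho⟩ := Finite.exists_min fun o : Option ι => o.elim 1 f
  refine ⟨o.elim 1 f, ?_, fun i => ho (some i)⟩
  cases o <;> simp [hf]

lemma toReal_volume_image_mem_Icc {f f' : ℝ → ℝ} {s : Set ℝ} {m M : ℝ} (hs : MeasurableSet s)
    (hs_fin : volume s ≠ ⊤) (hf : InjOn f s) (hf' : ∀ x ∈ s, HasDerivWithinAt f (f' x) s x)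
    (hm : 0 ≤ m) (hbd : ∀ x ∈ s, f' x ∈ Icc m M) :
    (volume (f '' s)).toReal ∈ Icc (m * (volume s).toReal) (M * (volume s).toReal) := by
  rcases s.eq_empty_or_nonempty with rfl | ⟨x₀, hx₀⟩
  · simp
  have hM : 0 ≤ M := hm.trans ((hbd x₀ hx₀).1.trans (hbd x₀ hx₀).2)
  have habs : ∀ x ∈ s, |f' x| = f' x := fun x hx => abs_of_nonneg (hm.trans (hbd x hx).1)
  have himg : volume (f '' s) = ∫⁻ x in s, ENNReal.ofReal |f' x| := by
    simpa using lintegral_image_eq_lintegral_abs_deriv_mul hs hf' hf 1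
  have hup : volume (f '' s) ≤ ENNReal.ofReal M * volume s := by
    rw [himg, ← setLIntegral_const]
    exact setLIntegral_mono' hs fun x hx =>
      ENNReal.ofReal_le_ofReal ((habs x hx).trans_le (hbd x hx).2)
  have hlow : ENNReal.ofReal m * volume s ≤ volume (f '' s) := by
    rw [himg, ← setLIntegral_const]
    exact setLIntegral_mono' hs fun x hx =>
      ENNReal.ofReal_le_ofReal ((hbd x hx).1.trans_eq (habs x hx).symm)
  have hbound_fin : ENNReal.ofReal M * volume s ≠ ⊤ :=
    ENNReal.mul_ne_top ENNReal.ofReal_ne_top hs_fin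
  constructor
  · simpa [ENNReal.toReal_mul, ENNReal.toReal_ofReal hm] using
      ENNReal.toReal_mono (ne_top_of_le_ne_top hbound_fin hup) hlow
  · simpa [ENNReal.toReal_mul, ENNReal.toReal_ofReal hM] using
      ENNReal.toReal_mono hbound_fin hup

namespace SchottkyData

variable {r : ℕ} (S : SchottkyData r)

lemma notMem_Ioo_of_mem_Icc {a b : Fin (2 * r)} (hab : a ≠ b) {x : ℝ}
    (hx : x ∈ Icc (S.ξ₀ a) (S.ξ₁ a)) : x ∉ Ioo (S.ξ₀ b) (S.ξ₁ b) := fun hxb =>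
  Set.disjoint_left.mp (S.hdisj a b hab) hx (Ioo_subset_Icc_self hxb)

lemma den_γ_ne_zero_and_mem_of_notMem (a : Fin (2 * r)) {x : ℝ}
    (hx : x ∉ Ioo (S.ξ₀ (bar a)) (S.ξ₁ (bar a))) :
    mobiusDen (S.γ a) x ≠ 0 ∧ mobius (S.γ a) x ∈ Icc (S.ξ₀ a) (S.ξ₁ a) := by
  have hmem :
      mobiusOP (S.γ a) x ∈ (fun t : ℝ => (t : OnePoint ℝ)) '' Icc (S.ξ₀ a) (S.ξ₁ a) := by
    rw [← S.hmap a]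
    refine mem_image_of_mem _ ⟨mem_univ _, ?_⟩
    rintro ⟨t, ht, hte⟩
    exact hx (OnePoint.coe_injective hte ▸ ht)
  obtain ⟨y, hy, hye⟩ := hmem
  change _ = if mobiusDen (S.γ a) x = 0 then _ else _ at hye
  split_ifs at hye with hden
  · exact absurd hye (OnePoint.coe_ne_infty y)
  · exact ⟨hden, OnePoint.coe_injective hye ▸ hy⟩

lemma den_wordγ_ne_zero_and_mem_of_notMem {l : List (Fin (2 * r))} (hl : l ≠ [])
    (hw : S.IsWord l) {x : ℝ}
    (hx : x ∉ Ioo (S.ξ₀ (bar (l.getLast hl))) (S.ξ₁ (bar (l.getLast hl)))) :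
    mobiusDen (S.wordγ l) x ≠ 0 ∧
      mobius (S.wordγ l) x ∈ Icc (S.ξ₀ (l.head hl)) (S.ξ₁ (l.head hl)) := by
  induction l with
  | nil => exact absurd rfl hl
  | cons a t ih =>
    rcases eq_or_ne t [] with rfl | ht
    · simpa [wordγ] using S.den_γ_ne_zero_and_mem_of_notMem a hx
    have hγ : S.wordγ (a :: t) = S.γ a * S.wordγ t := by simp [wordγ]
    have hhead : t.head ht ≠ bar a := hw.rel_head? (List.head?_eq_some_head ht)
    obtain ⟨hden, hmem⟩ := ih ht hw.tail (by rwa [List.getLast_cons ht] at hx)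
    obtain ⟨hden', hmem'⟩ :=
      S.den_γ_ne_zero_and_mem_of_notMem a (S.notMem_Ioo_of_mem_Icc hhead hmem)
    rw [hγ, mobiusDen_mul _ _ hden, mobius_mul _ _ hden hden']
    exact ⟨mul_ne_zero hden' hden, hmem'⟩

def IntervalsSeparatedBy (δ : ℝ) : Prop :=
  ∀ a b, a ≠ b → ∀ x ∈ Icc (S.ξ₀ a) (S.ξ₁ a), ∀ y ∈ Icc (S.ξ₀ b) (S.ξ₁ b), δ ≤ |x - y|

lemma exists_intervalsSeparatedBy : ∃ δ > 0, S.IntervalsSeparatedBy δ := by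
  have hpair : ∀ p : Fin (2 * r) × Fin (2 * r), ∃ δ > 0, p.1 ≠ p.2 →
      ∀ x ∈ Icc (S.ξ₀ p.1) (S.ξ₁ p.1), ∀ y ∈ Icc (S.ξ₀ p.2) (S.ξ₁ p.2), δ ≤ |x - y| := by
    rintro ⟨a, b⟩
    by_cases hab : a = b
    · exact ⟨1, one_pos, fun h => (h hab).elim⟩
    obtain ⟨δ, hδ, hsep⟩ :=
      Metric.exists_pos_forall_lt_edist isCompact_Icc isClosed_Icc (S.hdisj a b hab)
    refine ⟨δ, hδ, fun _ x hx y hy => ?_⟩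
    have hlt := hsep x hx y hy
    rw [edist_dist, ← ENNReal.ofReal_coe_nnreal] at hlt
    exact ((ENNReal.ofReal_lt_ofReal_iff_of_nonneg δ.2).1 hlt).le
  choose δ hδ hsep using hpair
  obtain ⟨δ₀, hδ₀, hle⟩ := Finite.exists_pos_le δ hδ
  exact ⟨δ₀, hδ₀, fun a b hab x hx y hy => (hle (a, b)).trans (hsep (a, b) hab x hx y hy)⟩

lemma poleSeparated_wordγ_dropLast {δ : ℝ} (hgap : S.IntervalsSeparatedBy δ)
    {l : List (Fin (2 * r))} (hl : l ≠ []) (hw : S.IsWord l) :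
    PoleSeparated (S.wordγ l.dropLast) δ (Icc (S.ξ₀ (l.getLast hl)) (S.ξ₁ (l.getLast hl))) := by
  intro p hp y hy
  have hd : l.dropLast ≠ [] := by
    rintro hd
    rw [hd, wordγ, List.map_nil, List.prod_nil, mobiusDen_one] at hp
    exact one_ne_zero hp
  have hlast : l.getLast hl ≠ bar (l.dropLast.getLast hd) := hw.rel_getLast_dropLast hd
  have hpole :
      p ∈ Ioo (S.ξ₀ (bar (l.dropLast.getLast hd))) (S.ξ₁ (bar (l.dropLast.getLast hd))) :=
    by_contra fun hp' => (S.den_wordγ_ne_zero_and_mem_of_notMem hd hw.dropLast hp').1 hp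
  exact hgap _ _ hlast y hy p (Ioo_subset_Icc_self hpole)

end SchottkyData

/-- **Distortion estimates for Schottky groups:** there is `C_Γ > 0` depending only on the
Schottky data such that for every nonempty word `𝐚 = a_1…a_n` and `x, y ∈ I_{a_n}`:
(i) `C_Γ⁻¹|I_𝐚| ≤ γ'_{𝐚'}(x) ≤ C_Γ|I_𝐚|`;
(ii) `γ'_{𝐚'}(x)/γ'_{𝐚'}(y) ≤ exp(C_Γ|x−y|)`;
(iii) for every Borel `I' ⊂ I_{a_n}`, `C_Γ⁻¹|I_𝐚||I'| ≤ |γ_{𝐚'}(I')| ≤ C_Γ|I_𝐚||I'|`. -/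
theorem tree_derivative (r : ℕ) (S : SchottkyData r) :
    ∃ C > (0 : ℝ), ∀ (l : List (Fin (2 * r))) (hl : l ≠ []), S.IsWord l →
      (∀ x ∈ Icc (S.ξ₀ (l.getLast hl)) (S.ξ₁ (l.getLast hl)),
        C⁻¹ * ivlen (S.wordI l) ≤ mobiusDeriv (S.wordγ l.dropLast) x ∧
        mobiusDeriv (S.wordγ l.dropLast) x ≤ C * ivlen (S.wordI l)) ∧
      (∀ x ∈ Icc (S.ξ₀ (l.getLast hl)) (S.ξ₁ (l.getLast hl)),
        ∀ y ∈ Icc (S.ξ₀ (l.getLast hl)) (S.ξ₁ (l.getLast hl)),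
        mobiusDeriv (S.wordγ l.dropLast) x / mobiusDeriv (S.wordγ l.dropLast) y ≤
          Real.exp (C * |x - y|)) ∧
      (∀ I' : Set ℝ, I' ⊆ Icc (S.ξ₀ (l.getLast hl)) (S.ξ₁ (l.getLast hl)) →
        MeasurableSet I' →
        C⁻¹ * ivlen (S.wordI l) * (volume I').toReal ≤
            (volume (mobius (S.wordγ l.dropLast) '' I')).toReal ∧
          (volume (mobius (S.wordγ l.dropLast) '' I')).toReal ≤
            C * ivlen (S.wordI l) * (volume I').toReal) := by
  obtain ⟨δ, hδ, hgap⟩ := S.exists_intervalsSeparatedBy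
  obtain ⟨M, hM⟩ := Finite.exists_le fun a : Fin (2 * r) =>
    (1 + (S.ξ₁ a - S.ξ₀ a) / δ) ^ 2 * max (S.ξ₁ a - S.ξ₀ a) (S.ξ₁ a - S.ξ₀ a)⁻¹
  set C := max M (2 / δ)
  have hC : 0 < C := (div_pos two_pos hδ).trans_le (le_max_right _ _)
  refine ⟨C, hC, fun l hl hw => ?_⟩
  have hsep := S.poleSeparated_wordγ_dropLast hgap hl hw
  have hne := fun x (hx : x ∈ Icc (S.ξ₀ (l.getLast hl)) (S.ξ₁ (l.getLast hl))) =>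
    hsep.mobiusDen_ne_zero hδ hx
  have hderiv : ∀ x ∈ Icc (S.ξ₀ (l.getLast hl)) (S.ξ₁ (l.getLast hl)),
      mobiusDeriv (S.wordγ l.dropLast) x ∈
        Icc (C⁻¹ * ivlen (S.wordI l)) (C * ivlen (S.wordI l)) :=
    fun x hx => by
      rw [SchottkyData.wordI, dif_neg hl]
      exact hsep.mobiusDeriv_mem_Icc hδ (S.hlt _) ((hM _).trans (le_max_left _ _)) hx
  refine ⟨hderiv, fun x hx y _ => (hsep.mobiusDeriv_div_le_exp hδ hx y).trans ?_,
    fun I' hI' hI'_meas => ?_⟩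
  · gcongr
    exact le_max_right _ _
  · exact toReal_volume_image_mem_Icc hI'_meas
      (measure_ne_top_of_subset hI' measure_Icc_lt_top.ne)
      ((strictMonoOn_mobius hne).injOn.mono hI')
      (fun x hx => (hasDerivAt_mobius _ (hne x (hI' hx))).hasDerivWithinAt)
      (mul_nonneg (inv_nonneg.mpr hC.le) ENNReal.toReal_nonneg) fun x hx => hderiv x (hI' hx)

end
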